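/- arXiv:1211.5640 — 4 statements merged into one kernel-verified Lean document; each statement's English description precedes it below -/
import Mathlib

section
/- Every graph G contains a vertex set S such that (1) S is matchable to the set of components of G−S (i.e., the bipartite graph obtained by contracting each component of G−S to a single vertex and deleting edges inside S has a matching saturating S), and (2) every component of G−S is factor-critical. Moreover, for any such S, G has a perfect matching if and only if |S| equals the number of components of G−S. -/
open SimpleGraph

/-- A graph is factor-critical if deleting any vertex leaves a graph with a perfect matching. -/
def FactorCritical {V : Type} (G : SimpleGraph V) : Prop :=
  ∀ v : V, ∃ M : G.Subgraph, M.IsMatching ∧ M.verts = {v}ᶜ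

/-- `S` is matchable to the components of `G - S`: the bipartite graph obtained by
contracting each component of `G - S` to a single vertex (and deleting edges inside `S`)
has a matching saturating `S`; equivalently there is an injective assignment of a distinct
component to each vertex of `S` containing one of its neighbors. -/
def MatchableToComponents {V : Type} (G : SimpleGraph V) (S : Set V) : Prop :=
  ∃ φ : S → (G.induce Sᶜ).ConnectedComponent, Function.Injective φ ∧
    ∀ s : S, ∃ w : ↥(Sᶜ : Set V), (G.induce Sᶜ).connectedComponentMk w = φ s ∧ G.Adj s w

/-- Every component of `G - S` is factor-critical. -/
def AllComponentsFactorCritical {V : Type} (G : SimpleGraph V) (S : Set V) : Prop :=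
  ∀ C : (G.induce Sᶜ).ConnectedComponent,
    FactorCritical ((G.induce Sᶜ).induce {v | (G.induce Sᶜ).connectedComponentMk v = C})

/-!
Choose `S` of maximum deficiency `o(G - S) - |S|`, where `o` counts odd components, and of
largest size among those. Moving a nonempty set `D` from a component `K` of `G - S` into `S` must
then strictly decrease the deficiency. With parity this forces every component to be odd
(take `D = {v}`) and factor-critical (take `D = {v} ∪ T` for a Tutte violator `T` of `K - v`).
Hall's condition for matching `S` into the components holds because deleting from `S` a subset
with fewer neighbouring components than vertices would increase the deficiency.

For the second part, a perfect matching joins every (odd) component to its own vertex of `S`, so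
there are at most `|S|` components; conversely, if `S` is matched bijectively onto the components,
the edges `s w` together with perfect matchings of the `C - w` cover every vertex.
-/

namespace SimpleGraph

variable {V W : Type*} {G : SimpleGraph V} {H : SimpleGraph W} {A B D K L S : Set V}

def IsMatchable (G : SimpleGraph V) (X : Set V) : Prop :=
  ∃ M : G.Subgraph, M.IsMatching ∧ M.verts = X

lemma isMatchable_univ_iff :
    G.IsMatchable Set.univ ↔ ∃ M : G.Subgraph, M.IsPerfectMatching := by
  simp only [IsMatchable, Subgraph.IsPerfectMatching, Subgraph.isSpanning_iff]

lemma IsMatchable.even_ncard [Finite V] {X : Set V} (h : G.IsMatchable X) : Even X.ncard := by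
  obtain ⟨M, hM, rfl⟩ := h
  have := Fintype.ofFinite M.verts
  rw [Set.ncard_eq_toFinset_card']
  exact hM.even_card

lemma odd_ncard_of_isMatchable_sdiff_singleton [Finite V] {K : Set V} {v : V} (hv : v ∈ K)
    (h : G.IsMatchable (K \ {v})) : Odd K.ncard := by
  rw [← Set.ncard_sdiff_singleton_add_one hv]
  exact h.even_ncard.add_one

lemma IsMatchable.insert_of_adj {X : Set V} {s w : V} (h : G.IsMatchable (X \ {w}))
    (hw : w ∈ X) (hs : s ∉ X) (hadj : G.Adj s w) : G.IsMatchable (insert s X) := by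
  obtain ⟨M, hM, hMv⟩ := h
  have hedge := Subgraph.IsMatching.subgraphOfAdj hadj
  refine ⟨G.subgraphOfAdj hadj ⊔ M, hedge.sup hM ?_, ?_⟩
  · rw [hedge.support_eq_verts, hM.support_eq_verts, hMv, subgraphOfAdj_verts]
    rw [Set.disjoint_insert_left, Set.disjoint_singleton_left]
    exact ⟨fun h => hs h.1, fun h => h.2 rfl⟩
  · rw [Subgraph.verts_sup, subgraphOfAdj_verts, hMv]
    ext x
    by_cases hx : x = w <;> simp [hx, hw]

lemma isMatchable_iUnion {ι : Type*} {X : ι → Set V} (h : ∀ i, G.IsMatchable (X i))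
    (hX : Pairwise fun i j => Disjoint (X i) (X j)) : G.IsMatchable (⋃ i, X i) := by
  choose M hM hMv using h
  refine ⟨⨆ i, M i, Subgraph.IsMatching.iSup hM fun i j hij => ?_, by simp [hMv]⟩
  simpa only [(hM _).support_eq_verts, hMv] using hX hij

lemma Embedding.isMatchable_image_iff (f : H ↪g G) (Y : Set W) :
    G.IsMatchable (f '' Y) ↔ H.IsMatchable Y := by
  constructor
  · rintro ⟨M, hM, hMv⟩
    refine ⟨M.comap f.toHom, fun a ha => ?_, by simp [hMv, f.injective.preimage_image]⟩
    obtain ⟨w, hw, huniq⟩ := hM (show f a ∈ M.verts from ha)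
    obtain ⟨b, -, rfl⟩ : w ∈ f '' Y := hMv ▸ M.edge_vert hw.symm
    exact ⟨b, ⟨f.map_adj_iff.1 (M.adj_sub hw), hw⟩,
      fun b' hb' => f.injective (huniq _ hb'.2)⟩
  · rintro ⟨M, hM, rfl⟩
    exact ⟨M.map f.toHom, hM.map f.toHom f.injective, Subgraph.map_verts _ _⟩

/-- `K` is the vertex set of a connected component of `G.induce A`. -/
def IsComponentOf (G : SimpleGraph V) (K A : Set V) : Prop :=
  K ⊆ A ∧ (G.induce K).Connected ∧
    ∀ ⦃v w⦄, v ∈ K → w ∈ A → G.Adj v w → w ∈ K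

lemma IsComponentOf.nonempty (hK : G.IsComponentOf K A) : K.Nonempty :=
  Set.nonempty_coe_sort.1 hK.2.1.nonempty

lemma isComponentOf_self (h : (G.induce K).Connected) : G.IsComponentOf K K :=
  ⟨subset_rfl, h, fun _ _ _ hw _ => hw⟩

lemma IsComponentOf.subset_of_preconnected (hK : G.IsComponentOf K A) (hLA : L ⊆ A)
    (hL : (G.induce L).Preconnected) {v : V} (hvK : v ∈ K) (hvL : v ∈ L) : L ⊆ K := by
  have hwalk : ∀ u w : L, (G.induce L).Reachable u w → u.1 ∈ K → w.1 ∈ K := by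
    rintro u w ⟨p⟩
    induction p with
    | nil => exact id
    | cons hadj _ ih => exact fun hu => ih (hK.2.2 hu (hLA (Subtype.prop _)) hadj)
  exact fun w hw => hwalk ⟨v, hvL⟩ ⟨w, hw⟩ (hL _ _) hvK

lemma IsComponentOf.eq_of_mem (hK : G.IsComponentOf K A) (hL : G.IsComponentOf L A) {v : V}
    (hvK : v ∈ K) (hvL : v ∈ L) : K = L :=
  (hL.subset_of_preconnected hK.1 hK.2.1.preconnected hvL hvK).antisymm
    (hK.subset_of_preconnected hL.1 hL.2.1.preconnected hvK hvL)

lemma IsComponentOf.mono (hK : G.IsComponentOf K A) (hKB : K ⊆ B) (hBA : B ⊆ A) :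
    G.IsComponentOf K B :=
  ⟨hKB, hK.2.1, fun _ _ hv hw => hK.2.2 hv (hBA hw)⟩

lemma IsComponentOf.of_sdiff (hK : G.IsComponentOf K A) (hL : G.IsComponentOf L (K \ D)) :
    G.IsComponentOf L (A \ D) :=
  ⟨hL.1.trans (Set.sdiff_subset_sdiff_left hK.1), hL.2.1, fun _ _ hv hw hadj =>
    hL.2.2 hv ⟨hK.2.2 (hL.1 hv).1 hw.1 hadj, hw.2⟩ hadj⟩

lemma Embedding.isComponentOf_image_supp (f : H ↪g G) (C : H.ConnectedComponent) :
    G.IsComponentOf (f '' C.supp) (Set.range f) := by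
  refine ⟨Set.image_subset_range _ _, ?_, ?_⟩
  · let g : C.toSimpleGraph →g G.induce (f '' C.supp) :=
      ⟨fun x => ⟨f x, Set.mem_image_of_mem f x.2⟩, fun h => f.map_adj_iff.2 h⟩
    refine C.connected_toSimpleGraph.map g ?_
    rintro ⟨_, x, hx, rfl⟩
    exact ⟨⟨x, hx⟩, rfl⟩
  · rintro _ _ ⟨a, ha, rfl⟩ ⟨b, rfl⟩ hadj
    exact Set.mem_image_of_mem f (C.mem_supp_of_adj_mem_supp ha (f.map_adj_iff.1 hadj))

lemma Embedding.image_supp_injective (f : H ↪g G) :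
    Function.Injective fun C : H.ConnectedComponent => f '' C.supp := by
  intro C D h
  obtain ⟨a, ha⟩ := C.nonempty_supp
  have hfa : f a ∈ f '' D.supp := by
    rw [← show f '' C.supp = f '' D.supp from h]
    exact Set.mem_image_of_mem f ha
  exact ConnectedComponent.eq_of_common_vertex ha (f.injective.mem_set_image.1 hfa)

lemma Embedding.range_image_supp (f : H ↪g G) :
    Set.range (fun C : H.ConnectedComponent => f '' C.supp) =
      {K | G.IsComponentOf K (Set.range f)} := by
  ext K
  refine ⟨by rintro ⟨C, rfl⟩; exact Embedding.isComponentOf_image_supp f C, fun hK => ?_⟩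
  obtain ⟨v, hv⟩ := hK.nonempty
  obtain ⟨a, rfl⟩ := hK.1 hv
  exact ⟨H.connectedComponentMk a,
    (Embedding.isComponentOf_image_supp f _).eq_of_mem hK (Set.mem_image_of_mem f rfl) hv⟩

lemma Embedding.range_induce (A : Set V) : Set.range (Embedding.induce A : G.induce A ↪g G) = A :=
  Subtype.range_coe

lemma isComponentOf_iff_exists_induce :
    G.IsComponentOf K A ↔ ∃ C : (G.induce A).ConnectedComponent, Subtype.val '' C.supp = K := by
  have h := Set.ext_iff.1 (Embedding.range_image_supp (Embedding.induce A : G.induce A ↪g G)) K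
  rw [Set.mem_ofPred_eq, Embedding.range_induce] at h
  exact h.symm

def oddComps (G : SimpleGraph V) (A : Set V) : Set (Set V) :=
  {K | G.IsComponentOf K A ∧ Odd K.ncard}

lemma Embedding.natCard_connectedComponent_eq (f : H ↪g G) :
    Nat.card H.ConnectedComponent = {K | G.IsComponentOf K (Set.range f)}.ncard := by
  rw [← Embedding.range_image_supp f,
    Set.ncard_range_of_injective (Embedding.image_supp_injective f)]

lemma Embedding.ncard_oddComponents_eq (f : H ↪g G) :
    H.oddComponents.ncard = (G.oddComps (Set.range f)).ncard := by
  have hodd : G.oddComps (Set.range f) = (fun C => f '' C.supp) '' H.oddComponents := by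
    ext K
    constructor
    · rintro ⟨hK, hodd⟩
      obtain ⟨C, rfl⟩ : K ∈ Set.range fun C : H.ConnectedComponent => f '' C.supp := by
        rwa [Embedding.range_image_supp]
      exact ⟨C, by rwa [Set.ncard_image_of_injective _ f.injective] at hodd, rfl⟩
    · rintro ⟨C, hC, rfl⟩
      exact ⟨Embedding.isComponentOf_image_supp f C,
        by rwa [Set.ncard_image_of_injective _ f.injective]⟩
  rw [hodd, Set.ncard_image_of_injective _ (Embedding.image_supp_injective f)]

lemma odd_ncard_oddComps_iff [Finite V] (A : Set V) :
    Odd (G.oddComps A).ncard ↔ Odd A.ncard := by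
  have h := odd_ncard_oddComponents (G.induce A)
  rwa [Embedding.ncard_oddComponents_eq (Embedding.induce A), Nat.card_coe_set_eq,
    Embedding.range_induce] at h

lemma ncard_oddComps_le_one [Finite V] (h : (G.induce K).Connected) :
    (G.oddComps K).ncard ≤ 1 := by
  have hsub : G.oddComps K ⊆ {K} := fun L hL => by
    obtain ⟨v, hv⟩ := hL.1.nonempty
    exact hL.1.eq_of_mem (isComponentOf_self h) hv (hL.1.1 hv)
  simpa using Set.ncard_le_ncard hsub

lemma ncard_oddComps_add_le [Finite V] (hK : G.IsComponentOf K A) (hD : D ⊆ K) :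
    (G.oddComps A).ncard + (G.oddComps (K \ D)).ncard ≤
      (G.oddComps (A \ D)).ncard + (G.oddComps K).ncard := by
  have hcover : G.oddComps A ⊆ (G.oddComps A \ {K}) ∪ G.oddComps K := by
    rintro L hL
    by_cases hLK : L = K
    · subst hLK
      exact Or.inr ⟨isComponentOf_self hL.1.2.1, hL.2⟩
    · exact Or.inl ⟨hL, hLK⟩
  have hdisj : Disjoint (G.oddComps A \ {K}) (G.oddComps (K \ D)) := by
    refine Set.disjoint_left.2 fun L ⟨hL, hLK⟩ hL' => hLK ?_
    obtain ⟨v, hv⟩ := hL'.1.nonempty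
    exact hL.1.eq_of_mem hK hv (hL'.1.1 hv).1
  have hsub : (G.oddComps A \ {K}) ∪ G.oddComps (K \ D) ⊆ G.oddComps (A \ D) := by
    rintro L (⟨hL, hLK⟩ | hL)
    · have hLD : L ⊆ A \ D := fun v hv =>
        ⟨hL.1.1 hv, fun hvD => hLK (hL.1.eq_of_mem hK hv (hD hvD))⟩
      exact ⟨hL.1.mono hLD Set.sdiff_subset, hL.2⟩
    · exact ⟨hK.of_sdiff hL.1, hL.2⟩
  calc (G.oddComps A).ncard + (G.oddComps (K \ D)).ncard
      ≤ (G.oddComps A \ {K}).ncard + (G.oddComps K).ncard + (G.oddComps (K \ D)).ncard := by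
        gcongr
        exact (Set.ncard_le_ncard hcover).trans (Set.ncard_union_le _ _)
    _ = ((G.oddComps A \ {K}) ∪ G.oddComps (K \ D)).ncard + (G.oddComps K).ncard := by
        rw [Set.ncard_union_eq hdisj]
        ring
    _ ≤ (G.oddComps (A \ D)).ncard + (G.oddComps K).ncard :=
        Nat.add_le_add_right (Set.ncard_le_ncard hsub) _

lemma ncard_oddComps_le_union [Finite V] (A X : Set V) :
    (G.oddComps A).ncard ≤ (G.oddComps (A ∪ X)).ncard +
      {K | G.IsComponentOf K A ∧ ∃ v ∈ K, ∃ x ∈ X, G.Adj v x}.ncard := by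
  have hcover : G.oddComps A ⊆
      G.oddComps (A ∪ X) ∪
        {K | G.IsComponentOf K A ∧ ∃ v ∈ K, ∃ x ∈ X, G.Adj v x} := by
    rintro K hK
    by_cases hadj : ∃ v ∈ K, ∃ x ∈ X, G.Adj v x
    · exact Or.inr ⟨hK.1, hadj⟩
    · refine Or.inl ⟨⟨hK.1.1.trans Set.subset_union_left, hK.1.2.1, ?_⟩, hK.2⟩
      rintro v w hv (hw | hw) hvw
      · exact hK.1.2.2 hv hw hvw
      · exact (hadj ⟨v, hv, w, hw, hvw⟩).elim
  exact (Set.ncard_le_ncard hcover).trans (Set.ncard_union_le _ _)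

theorem isMatchable_iff_forall_ncard_oddComps_le [Finite V] (X : Set V) :
    G.IsMatchable X ↔ ∀ T ⊆ X, (G.oddComps (X \ T)).ncard ≤ T.ncard := by
  have hinduce := Embedding.isMatchable_image_iff (Embedding.induce X : G.induce X ↪g G) Set.univ
  rw [Set.image_univ, Embedding.range_induce, isMatchable_univ_iff, tutte] at hinduce
  have hviolator (u : Set X) : ¬(G.induce X).IsTutteViolator u ↔
      (G.oddComps (X \ Subtype.val '' u)).ncard ≤ (Subtype.val '' u).ncard := by
    let e : ((⊤ : (G.induce X).Subgraph).deleteVerts u).coe ↪g G :=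
      ⟨⟨fun x => x.1.1, fun x y h => Subtype.ext (Subtype.ext h)⟩,
        fun {x y} => ⟨fun h => ⟨x.2, y.2, h⟩, fun h => h.2.2⟩⟩
    have he : Set.range e = X \ Subtype.val '' u := by
      ext v
      constructor
      · rintro ⟨⟨⟨v, hvX⟩, hv⟩, rfl⟩
        exact ⟨hvX, fun ⟨w, hw, hwv⟩ =>
          hv.2 ((Subtype.ext hwv.symm : (⟨v, hvX⟩ : X) = w) ▸ hw)⟩
      · rintro ⟨hvX, hv⟩
        exact ⟨⟨⟨v, hvX⟩, trivial, fun h => hv ⟨_, h, rfl⟩⟩, rfl⟩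
    rw [IsTutteViolator, not_lt, Embedding.ncard_oddComponents_eq e, he,
      Set.ncard_image_of_injective _ Subtype.val_injective]
  rw [hinduce]
  refine ⟨fun h T hT => ?_, fun h u => (hviolator u).2 (h _ (Subtype.coe_image_subset X u))⟩
  have hu := (hviolator (Subtype.val ⁻¹' T)).1 (h _)
  rwa [Set.image_preimage_eq_of_subset (by rwa [Subtype.range_coe])] at hu

noncomputable def deficiency (G : SimpleGraph V) (T : Set V) : ℤ :=
  (G.oddComps Tᶜ).ncard - T.ncard

def IsMaximumBarrier (G : SimpleGraph V) (S : Set V) : Prop :=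
  (∀ T, G.deficiency T ≤ G.deficiency S) ∧
    ∀ T, S.ncard < T.ncard → G.deficiency T < G.deficiency S

lemma exists_isMaximumBarrier [Finite V] (G : SimpleGraph V) : ∃ S, G.IsMaximumBarrier S := by
  obtain ⟨S, hS⟩ := Finite.exists_max fun T : Set V => toLex (G.deficiency T, T.ncard)
  refine ⟨S, fun T => ?_, fun T hT => ?_⟩ <;>
  · have hT := hS T
    rw [Prod.Lex.toLex_le_toLex] at hT
    omega

lemma IsMaximumBarrier.ncard_oddComps_sdiff_lt [Finite V] (hS : G.IsMaximumBarrier S)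
    (hK : G.IsComponentOf K Sᶜ) (hD : D ⊆ K) (hDne : D.Nonempty) :
    (G.oddComps (K \ D)).ncard < D.ncard + (G.oddComps K).ncard := by
  have hcount := ncard_oddComps_add_le hK hD
  have hunion : (S ∪ D).ncard = S.ncard + D.ncard :=
    Set.ncard_union_eq (Set.disjoint_right.2 fun _ hv => hK.1 (hD hv))
  have hlt := hS.2 (S ∪ D) (by rw [hunion]; have := hDne.ncard_pos; omega)
  rw [deficiency, deficiency, Set.compl_union, ← Set.sdiff_eq, hunion] at hlt
  omega

lemma IsMaximumBarrier.odd_ncard [Finite V] (hS : G.IsMaximumBarrier S)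
    (hK : G.IsComponentOf K Sᶜ) : Odd K.ncard := by
  obtain ⟨v, hv⟩ := hK.nonempty
  have hlt := hS.ncard_oddComps_sdiff_lt hK (Set.singleton_subset_iff.2 hv) ⟨v, rfl⟩
  have hle := ncard_oddComps_le_one hK.2.1
  have hparK := odd_ncard_oddComps_iff (G := G) K
  have hparKv := odd_ncard_oddComps_iff (G := G) (K \ {v})
  have hcard := Set.ncard_sdiff_singleton_add_one hv
  rw [Set.ncard_singleton] at hlt
  -- for even `K`, `o(K) ≤ 1` is even, hence `0`, while `o(K \ {v})` is odd
  simp only [Nat.odd_iff] at hparK hparKv ⊢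
  omega

lemma IsMaximumBarrier.isMatchable_sdiff_singleton [Finite V] (hS : G.IsMaximumBarrier S)
    (hK : G.IsComponentOf K Sᶜ) {v : V} (hv : v ∈ K) : G.IsMatchable (K \ {v}) := by
  by_contra hnot
  rw [isMatchable_iff_forall_ncard_oddComps_le] at hnot
  push Not at hnot
  obtain ⟨T, hT, hviolate⟩ := hnot
  have hvT : v ∉ T := fun h => (hT h).2 rfl
  have hTK : insert v T ⊆ K := Set.insert_subset hv fun x hx => (hT hx).1
  have hlt := hS.ncard_oddComps_sdiff_lt hK hTK (Set.insert_nonempty v T)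
  rw [Set.ncard_insert_of_notMem hvT, ← Set.singleton_union, ← Set.sdiff_sdiff] at hlt
  have hle := ncard_oddComps_le_one hK.2.1
  have hpar := odd_ncard_oddComps_iff (G := G) ((K \ {v}) \ T)
  have hodd := hS.odd_ncard hK
  have hcard := Set.ncard_sdiff_singleton_add_one hv
  have hcardT := Set.ncard_sdiff_add_ncard_of_subset hT
  -- `|K \ {v} \ T| ≡ |T| (mod 2)`, so the violation gives `o(K \ {v} \ T) ≥ |T| + 2`
  simp only [Nat.odd_iff] at hpar hodd
  omega

lemma IsMaximumBarrier.exists_injective [Finite V] (hS : G.IsMaximumBarrier S) :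
    ∃ g : S → Set V, Function.Injective g ∧
      ∀ s : S, G.IsComponentOf (g s) Sᶜ ∧ ∃ w ∈ g s, G.Adj s w := by
  classical
  let nbhd (s : S) : Finset (Set V) :=
    (Set.toFinite {K | G.IsComponentOf K Sᶜ ∧ ∃ w ∈ K, G.Adj s w}).toFinset
  suffices hHall : ∀ s' : Finset S, s'.card ≤ (s'.biUnion nbhd).card by
    obtain ⟨g, hg, hgn⟩ := (Finset.all_card_le_biUnion_card_iff_existsInjective' nbhd).1 hHall
    exact ⟨g, hg, fun s => by simpa [nbhd] using hgn s⟩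
  intro s'
  set S₀ : Set V := Subtype.val '' (s' : Set S)
  have hadj : {K | G.IsComponentOf K Sᶜ ∧ ∃ v ∈ K, ∃ x ∈ S₀, G.Adj v x}.ncard ≤
      (s'.biUnion nbhd).card := by
    rw [← Set.ncard_coe_finset]
    refine Set.ncard_le_ncard ?_
    rintro K ⟨hK, v, hv, _, ⟨s, hs, rfl⟩, hvs⟩
    simpa [nbhd] using ⟨hK, s, ⟨s.2, Finset.mem_coe.1 hs⟩, v, hv, hvs.symm⟩
  have hcount := ncard_oddComps_le_union (G := G) Sᶜ S₀
  have hdef := hS.1 (S \ S₀)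
  have hS₀ : S₀.ncard = s'.card := by
    rw [Set.ncard_image_of_injective _ Subtype.val_injective, Set.ncard_coe_finset]
  have hcard : (S \ S₀).ncard + S₀.ncard = S.ncard :=
    Set.ncard_sdiff_add_ncard_of_subset (Subtype.coe_image_subset S s')
  rw [deficiency, deficiency, Set.compl_sdiff, Set.union_comm] at hdef
  omega

end SimpleGraph

section

variable {V W : Type} {G : SimpleGraph V} {H : SimpleGraph W} {S : Set V}

lemma factorCritical_iff_of_embedding (f : H ↪g G) :
    FactorCritical H ↔ ∀ v ∈ Set.range f, G.IsMatchable (Set.range f \ {v}) := by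
  rw [Set.forall_mem_range]
  refine forall_congr' fun v => ?_
  rw [← Set.image_singleton, ← Set.image_compl_eq_range_sdiff_image f.injective,
    Embedding.isMatchable_image_iff]
  rfl

lemma factorCritical_component_iff {A : Set V} (C : (G.induce A).ConnectedComponent) :
    FactorCritical ((G.induce A).induce {v | (G.induce A).connectedComponentMk v = C}) ↔
      ∀ v ∈ Subtype.val '' C.supp, G.IsMatchable (Subtype.val '' C.supp \ {v}) := by
  have hrange : Set.range ((Embedding.induce C.supp).trans (Embedding.induce A) :
      (G.induce A).induce C.supp ↪g G) = Subtype.val '' C.supp := by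
    rw [RelEmbedding.coe_trans, Set.range_comp, Embedding.range_induce]
    rfl
  rw [← hrange]
  exact factorCritical_iff_of_embedding _

lemma allComponentsFactorCritical_iff : AllComponentsFactorCritical G S ↔
    ∀ K, G.IsComponentOf K Sᶜ → ∀ v ∈ K, G.IsMatchable (K \ {v}) := by
  simp only [AllComponentsFactorCritical, factorCritical_component_iff,
    isComponentOf_iff_exists_induce]
  exact ⟨fun h K ⟨C, hC⟩ => hC ▸ h C, fun h C => h _ ⟨C, rfl⟩⟩

lemma AllComponentsFactorCritical.oddComps_eq [Finite V] (h : AllComponentsFactorCritical G S) :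
    G.oddComps Sᶜ = {K | G.IsComponentOf K Sᶜ} := by
  ext K
  refine ⟨And.left, fun hK => ⟨hK, ?_⟩⟩
  obtain ⟨v, hv⟩ := hK.nonempty
  exact odd_ncard_of_isMatchable_sdiff_singleton hv (allComponentsFactorCritical_iff.1 h K hK v hv)

lemma matchableToComponents_of_injective {g : S → Set V} (hg : Function.Injective g)
    (hgS : ∀ s : S, G.IsComponentOf (g s) Sᶜ ∧ ∃ w ∈ g s, G.Adj s w) :
    MatchableToComponents G S := by
  choose C hC using fun s => isComponentOf_iff_exists_induce.1 (hgS s).1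
  refine ⟨C, fun s t hst => hg (by rw [← hC s, ← hC t, hst]), fun s => ?_⟩
  obtain ⟨x, hx, hadj⟩ := (hgS s).2
  rw [← hC s] at hx
  obtain ⟨w, hw, rfl⟩ := hx
  exact ⟨w, hw, hadj⟩

theorem exists_matchableToComponents_allComponentsFactorCritical [Finite V] (G : SimpleGraph V) :
    ∃ S, MatchableToComponents G S ∧ AllComponentsFactorCritical G S := by
  obtain ⟨S, hS⟩ := exists_isMaximumBarrier G
  obtain ⟨g, hg, hgS⟩ := hS.exists_injective
  exact ⟨S, matchableToComponents_of_injective hg hgS,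
    allComponentsFactorCritical_iff.2 fun _ hK _ hv => hS.isMatchable_sdiff_singleton hK hv⟩

lemma natCard_connectedComponent_le_of_isPerfectMatching [Finite V]
    (hfc : AllComponentsFactorCritical G S) (hM : ∃ M : G.Subgraph, M.IsPerfectMatching) :
    Nat.card (G.induce Sᶜ).ConnectedComponent ≤ S.ncard := by
  rw [← isMatchable_univ_iff, isMatchable_iff_forall_ncard_oddComps_le] at hM
  have h := hM S (Set.subset_univ S)
  rwa [← Set.compl_eq_univ_sdiff, hfc.oddComps_eq, ← Embedding.range_induce (G := G) Sᶜ,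
    ← Embedding.natCard_connectedComponent_eq] at h

theorem exists_isPerfectMatching_of_bijective [Finite V]
    {φ : S → (G.induce Sᶜ).ConnectedComponent} (hφ : Function.Bijective φ)
    (hφadj : ∀ s : S, ∃ w : ↥(Sᶜ : Set V),
      (G.induce Sᶜ).connectedComponentMk w = φ s ∧ G.Adj s w)
    (hfc : AllComponentsFactorCritical G S) : ∃ M : G.Subgraph, M.IsPerfectMatching := by
  choose w hw hadj using hφadj
  set K : S → Set V := fun s => Subtype.val '' (φ s).supp
  have hK (s : S) : G.IsComponentOf (K s) Sᶜ := isComponentOf_iff_exists_induce.2 ⟨φ s, rfl⟩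
  have hwK (s : S) : (w s : V) ∈ K s := ⟨w s, hw s, rfl⟩
  have hpiece (s : S) : G.IsMatchable (insert (s : V) (K s)) :=
    (allComponentsFactorCritical_iff.1 hfc _ (hK s) _ (hwK s)).insert_of_adj (hwK s)
      (fun h => (hK s).1 h s.2) (hadj s)
  have hdisj : Pairwise fun s t : S => Disjoint (insert (s : V) (K s)) (insert (t : V) (K t)) := by
    intro s t hst
    refine Set.disjoint_left.2 fun x hxs hxt => ?_
    rcases hxs with rfl | hxs <;> rcases hxt with hxt | hxt
    · exact hst (Subtype.ext hxt)
    · exact (hK t).1 hxt s.2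
    · exact (hK s).1 hxs (hxt ▸ t.2)
    · exact hst (hφ.1 (Embedding.image_supp_injective (Embedding.induce Sᶜ)
        ((hK s).eq_of_mem (hK t) hxs hxt)))
  have hcover : ⋃ s : S, insert (s : V) (K s) = Set.univ := by
    refine Set.eq_univ_of_forall fun v => ?_
    by_cases hv : v ∈ S
    · exact Set.mem_iUnion.2 ⟨⟨v, hv⟩, Set.mem_insert _ _⟩
    · obtain ⟨s, hs⟩ := hφ.2 ((G.induce Sᶜ).connectedComponentMk ⟨v, hv⟩)
      exact Set.mem_iUnion.2 ⟨s, Or.inr ⟨⟨v, hv⟩, hs.symm, rfl⟩⟩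
  rw [← isMatchable_univ_iff, ← hcover]
  exact isMatchable_iUnion hpiece hdisj

theorem exists_isPerfectMatching_iff_ncard_eq [Finite V] (hm : MatchableToComponents G S)
    (hfc : AllComponentsFactorCritical G S) :
    (∃ M : G.Subgraph, M.IsPerfectMatching) ↔
      S.ncard = Nat.card (G.induce Sᶜ).ConnectedComponent := by
  obtain ⟨φ, hφ, hφadj⟩ := hm
  have hle : S.ncard ≤ Nat.card (G.induce Sᶜ).ConnectedComponent := by
    rw [← Nat.card_coe_set_eq]
    exact Nat.card_le_card_of_injective φ hφ
  refine ⟨fun hM => hle.antisymm (natCard_connectedComponent_le_of_isPerfectMatching hfc hM),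
    fun hcard => exists_isPerfectMatching_of_bijective ?_ hφadj hfc⟩
  exact (Nat.bijective_iff_injective_and_card φ).2 ⟨hφ, by rw [Nat.card_coe_set_eq, hcard]⟩

end

/-- Gallai–Edmonds type strengthening of Tutte's theorem: every graph contains a set `S`
matchable to the components of `G - S` with all components of `G - S` factor-critical;
moreover for any such `S`, `G` has a perfect matching iff `|S|` equals the number of
components of `G - S`. -/
theorem gallai_edmonds_matchable {V : Type} [Fintype V] (G : SimpleGraph V) :
    (∃ S : Set V, MatchableToComponents G S ∧ AllComponentsFactorCritical G S) ∧
    (∀ S : Set V, MatchableToComponents G S → AllComponentsFactorCritical G S →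
      ((∃ M : G.Subgraph, M.IsPerfectMatching) ↔
        S.ncard = Nat.card (G.induce Sᶜ).ConnectedComponent)) :=
  ⟨exists_matchableToComponents_allComponentsFactorCritical G,
    fun _ hm hfc => exists_isPerfectMatching_iff_ncard_eq hm hfc⟩
end

section
/- Every non-trivial (i.e., having more than one vertex) factor-critical subgraph of a fullerene graph is 2-connected. -/
open SimpleGraph

/-- The set of edges of `G` with exactly one endpoint in `X` (the edge cut `∇(X)`). -/
def edgeCut {V : Type} (G : SimpleGraph V) (X : Set V) : Set (Sym2 V) :=
  {e | ∃ a b, G.Adj a b ∧ e = s(a,b) ∧ a ∈ X ∧ b ∉ X}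

/-- The set of edges of `G` with one endpoint in `X` and the other in `Y`. -/
def edgesBetween {V : Type} (G : SimpleGraph V) (X Y : Set V) : Set (Sym2 V) :=
  {e | ∃ a b, G.Adj a b ∧ e = s(a,b) ∧ a ∈ X ∧ b ∈ Y}

/-- The set of edges of `G` with both endpoints in `X`. -/
def interiorEdges {V : Type} (G : SimpleGraph V) (X : Set V) : Set (Sym2 V) :=
  {e | e ∈ G.edgeSet ∧ ∀ v ∈ e, v ∈ X}

/-- `C` is a cyclic edge-cut of `G`: after deleting `C` there are cycles in two
different components. -/
def IsCyclicEdgeCut {V : Type} (G : SimpleGraph V) (C : Set (Sym2 V)) : Prop :=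
  C ⊆ G.edgeSet ∧ ∃ (u v : V) (p : (G.deleteEdges C).Walk u u) (q : (G.deleteEdges C).Walk v v),
    p.IsCycle ∧ q.IsCycle ∧ ¬ (G.deleteEdges C).Reachable u v

/-- `G` is cyclically `k`-edge-connected: every cyclic edge-cut has at least `k` edges. -/
def CyclicallyEdgeConnected {V : Type} (G : SimpleGraph V) (k : ℕ) : Prop :=
  ∀ C : Set (Sym2 V), IsCyclicEdgeCut G C → k ≤ C.ncard

/-- A graph is 2-connected if it has at least 3 vertices and deleting any vertex
leaves it connected. -/
def TwoConnected {W : Type} (G : SimpleGraph W) : Prop :=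
  3 ≤ Nat.card W ∧ ∀ v : W, ((⊤ : G.Subgraph).deleteVerts {v}).coe.Connected

/-- A combinatorial plane structure on a graph: an abstract set of faces, each face
being a cycle of the graph, with every edge lying on exactly two faces. -/
structure PlaneFaceStruct (V : Type) (G : SimpleGraph V) where
  Face : Type
  faceFinite : Finite Face
  boundary : Face → Set (Sym2 V)
  boundary_sub : ∀ f, boundary f ⊆ G.edgeSet
  boundary_cycle : ∀ f : Face, ∃ (v : V) (w : G.Walk v v), w.IsCycle ∧
    ∀ e, e ∈ boundary f ↔ e ∈ w.edges
  edge_faces : ∀ e ∈ G.edgeSet, {f : Face | e ∈ boundary f}.ncard = 2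

/-- A fullerene graph: a 3-connected cubic plane graph whose faces are pentagons and
hexagons, with exactly 12 pentagonal faces. -/
structure Fullerene (V : Type) [Fintype V] where
  G : SimpleGraph V
  threeConnected : ∀ S : Set V, S.ncard ≤ 2 → ((⊤ : G.Subgraph).deleteVerts S).coe.Connected
  cubic : ∀ v : V, Nat.card {w // G.Adj v w} = 3
  faces : PlaneFaceStruct V G
  face_size : ∀ f, (faces.boundary f).ncard = 5 ∨ (faces.boundary f).ncard = 6
  pentagons : {f : faces.Face | (faces.boundary f).ncard = 5}.ncard = 12

/-- The vertices on the boundary of a face. -/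
def Fullerene.faceVerts {V : Type} [Fintype V] (Fu : Fullerene V) (f : Fu.faces.Face) : Set V :=
  {v | ∃ e ∈ Fu.faces.boundary f, v ∈ e}

/-- `g` is a neighboring face of `f`: it is distinct from `f` and shares an edge with it. -/
def Fullerene.NeighboringFace {V : Type} [Fintype V] (Fu : Fullerene V)
    (g f : Fu.faces.Face) : Prop :=
  g ≠ f ∧ (Fu.faces.boundary g ∩ Fu.faces.boundary f).Nonempty

/-!
If `v` were a cut vertex of a factor-critical graph `G`, take a component `C` of `G - v`.
A perfect matching of `G - v` matches `C` within itself, so `|C|` is even; a perfect matching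
of `G - u`, for `u ∈ C`, must match the odd set `C \ {u}` partly to `v`. Hence `v` has a
neighbour in `C` other than `u`, for every `u ∈ C`, so `v` has two neighbours in each of the
at least two components of `G - v`, i.e. degree at least `4`, impossible in a subgraph of a
cubic graph. Finally, a factor-critical graph has odd order, so a non-trivial one has at
least three vertices.
-/

theorem Set.inter_nonempty_of_ncard_lt_ncard_add_ncard {α : Type*} {s t u : Set α}
    (hs : s ⊆ u) (ht : t ⊆ u) (hu : u.Finite) (h : u.ncard < s.ncard + t.ncard) :
    (s ∩ t).Nonempty := by
  rw [Set.nonempty_iff_ne_empty]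
  intro hst
  have := Set.ncard_inter_add_ncard_union s t (hu.subset hs) (hu.subset ht)
  rw [hst, Set.ncard_empty] at this
  have := Set.ncard_le_ncard (Set.union_subset hs ht) hu
  omega

namespace SimpleGraph

variable {W : Type} {G : SimpleGraph W}

theorem Subgraph.IsMatching.even_ncard_of_forall_adj_mem [Finite W] {M : G.Subgraph}
    (hM : M.IsMatching) {S : Set W} (hSM : S ⊆ M.verts)
    (hS : ∀ a ∈ S, ∀ b, M.Adj a b → b ∈ S) :
    Even S.ncard := by
  have hMS : (M.induce S).IsMatching := by
    intro a ha
    obtain ⟨b, hab, huniq⟩ := hM (hSM ha)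
    exact ⟨b, ⟨ha, hS a ha b hab, hab⟩, fun c hc => huniq c hc.2.2⟩
  have := Fintype.ofFinite (M.induce S).verts
  have h := hMS.even_card
  rw [← Set.ncard_eq_toFinset_card'] at h
  exact h

theorem Subgraph.ncard_coe_neighborSet_le [Finite W] (H : G.Subgraph) (v : H.verts) :
    (H.coe.neighborSet v).ncard ≤ (G.neighborSet v).ncard := by
  rw [← Set.ncard_image_of_injective _ Subtype.val_injective]
  refine Set.ncard_le_ncard ?_
  rintro _ ⟨w, hw, rfl⟩
  exact H.adj_sub hw

theorem FactorCritical.exists_adj_mem_ne_of_closed [Finite W] (hfc : FactorCritical G) {v : W}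
    {C : Set W} (hvC : v ∉ C) (hC : ∀ a ∈ C, ∀ b, G.Adj a b → b ≠ v → b ∈ C) {u : W}
    (hu : u ∈ C) : ∃ w ∈ C, w ≠ u ∧ G.Adj v w := by
  have hCeven : Even C.ncard := by
    obtain ⟨M, hM, hMv⟩ := hfc v
    refine hM.even_ncard_of_forall_adj_mem (fun a ha => ?_)
      (fun a ha b hab => hC a ha b (M.adj_sub hab) ?_)
    · rw [hMv]
      exact ne_of_mem_of_not_mem ha hvC
    · simpa [hMv] using M.edge_vert hab.symm
  by_contra! hno
  obtain ⟨M, hM, hMu⟩ := hfc u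
  have hCu_even : Even (C \ {u}).ncard := by
    refine hM.even_ncard_of_forall_adj_mem (fun a ha => by simpa [hMu] using ha.2)
      (fun a ha b hab => ⟨hC a ha.1 b (M.adj_sub hab) ?_, ?_⟩)
    · rintro rfl
      exact hno a ha.1 ha.2 (M.adj_sub hab).symm
    · simpa [hMu] using M.edge_vert hab.symm
  rw [Set.ncard_sdiff_singleton_of_mem hu] at hCu_even
  have := (Set.ncard_pos).mpr ⟨u, hu⟩
  obtain ⟨k, hk⟩ := hCeven
  obtain ⟨l, hl⟩ := hCu_even
  omega

theorem FactorCritical.one_lt_ncard_inter_neighborSet_of_closed [Finite W]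
    (hfc : FactorCritical G) {v : W} {C : Set W} (hvC : v ∉ C)
    (hC : ∀ a ∈ C, ∀ b, G.Adj a b → b ≠ v → b ∈ C) (hne : C.Nonempty) :
    1 < (C ∩ G.neighborSet v).ncard := by
  obtain ⟨u, hu⟩ := hne
  obtain ⟨w₁, hw₁, -, hvw₁⟩ := hfc.exists_adj_mem_ne_of_closed hvC hC hu
  obtain ⟨w₂, hw₂, hw₂₁, hvw₂⟩ := hfc.exists_adj_mem_ne_of_closed hvC hC hw₁
  exact (Set.one_lt_ncard_iff).mpr
    ⟨w₂, w₁, ⟨hw₂, hvw₂⟩, ⟨hw₁, hvw₁⟩, hw₂₁⟩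

theorem FactorCritical.three_le_card [Finite W] [Nontrivial W] (hfc : FactorCritical G) :
    3 ≤ Nat.card W := by
  obtain ⟨v⟩ := (inferInstance : Nonempty W)
  obtain ⟨M, hM, hMv⟩ := hfc v
  have heven : Even ({v}ᶜ : Set W).ncard :=
    hM.even_ncard_of_forall_adj_mem hMv.ge (fun _ _ b hab => hMv ▸ M.edge_vert hab.symm)
  have hpos : 0 < ({v}ᶜ : Set W).ncard := (Set.ncard_pos).mpr (exists_ne v)
  have hcard := Set.ncard_add_ncard_compl {v}
  rw [Set.ncard_singleton] at hcard
  obtain ⟨k, hk⟩ := heven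
  omega

theorem image_val_reachable_deleteVerts_closed {v : W}
    (a : ((⊤ : G.Subgraph).deleteVerts {v}).verts) :
    ∀ x ∈ Subtype.val '' {y | ((⊤ : G.Subgraph).deleteVerts {v}).coe.Reachable a y},
      ∀ z, G.Adj x z → z ≠ v →
        z ∈ Subtype.val '' {y | ((⊤ : G.Subgraph).deleteVerts {v}).coe.Reachable a y} := by
  rintro _ ⟨x, hax, rfl⟩ z hxz hzv
  have hz : z ∈ ((⊤ : G.Subgraph).deleteVerts {v}).verts := ⟨trivial, hzv⟩
  exact ⟨⟨z, hz⟩, hax.trans (Adj.reachable ⟨x.2, hz, hxz⟩), rfl⟩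

theorem FactorCritical.twoConnected [Finite W] [Nontrivial W] (hfc : FactorCritical G)
    (hdeg : ∀ v, (G.neighborSet v).ncard ≤ 3) : TwoConnected G := by
  refine ⟨hfc.three_le_card, fun v => ?_⟩
  obtain ⟨w, hwv⟩ := exists_ne v
  have : Nonempty ((⊤ : G.Subgraph).deleteVerts {v}).verts := ⟨⟨w, trivial, hwv⟩⟩
  refine ⟨fun a b => ?_⟩
  set K := ((⊤ : G.Subgraph).deleteVerts {v}).coe
  have hcomp (c : ((⊤ : G.Subgraph).deleteVerts {v}).verts) :
      1 < (Subtype.val '' {y | K.Reachable c y} ∩ G.neighborSet v).ncard :=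
    hfc.one_lt_ncard_inter_neighborSet_of_closed (by rintro ⟨x, -, hx⟩; exact x.2.2 hx)
      (image_val_reachable_deleteVerts_closed c) ⟨c, c, .rfl, rfl⟩
  obtain ⟨_, ⟨⟨x, hax, rfl⟩, -⟩, ⟨y, hby, hyx⟩, -⟩ :=
    Set.inter_nonempty_of_ncard_lt_ncard_add_ncard
      (Set.inter_subset_right (s := Subtype.val '' {y | K.Reachable a y}))
      (Set.inter_subset_right (s := Subtype.val '' {y | K.Reachable b y})) (Set.toFinite _)
      (by linarith [hdeg v, hcomp a, hcomp b])
  obtain rfl := Subtype.ext hyx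
  exact hax.trans hby.symm

end SimpleGraph

/-- Every non-trivial factor-critical subgraph of a fullerene graph is 2-connected. -/
theorem factorCritical_subgraph_twoConnected {V : Type} [Fintype V] (Fu : Fullerene V)
    (H : Fu.G.Subgraph) (hnt : H.verts.Nontrivial) (hfc : FactorCritical H.coe) :
    TwoConnected H.coe := by
  have := hnt.coe_sort
  exact hfc.twoConnected fun v => (H.ncard_coe_neighborSet_le v).trans (Fu.cubic v).le
end

section
/- Let F be a fullerene graph without non-trivial cyclic 5-edge-cuts. If F* is a 2-connected non-trivial factor-critical subgraph of F disjoint from its complement's hexagons with |∇(F*)| = 5, then F* is a pentagon (a 5-cycle bounding a pentagonal face). -/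
open SimpleGraph

/-! `∇(F*)` separates a cycle of the 2-connected graph `F*` from the hexagon avoiding `F*`, so it
is a cyclic 5-edge-cut and therefore the cut of a pentagonal face `f`. Two connected vertex sets
with the same edge cut either coincide or cover the whole (connected) graph between them; the
hexagon has six vertices outside `F*`, which do not fit into `f`, so `F*` and `f` have the same
vertices. In a cubic graph, five edges leaving a 5-cycle must leave from five distinct vertices,
so the cycle has no chord; `F*`, of minimum degree two on these five vertices, then uses all five
edges. -/

theorem exists_ne_ne_of_three_le_card {W : Type} (h : 3 ≤ Nat.card W) (x y : W) :
    ∃ z, z ≠ x ∧ z ≠ y := by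
  have : Finite W := Nat.finite_of_card_ne_zero (by omega)
  by_contra! hxy
  have hsub : (Set.univ : Set W) ⊆ {x, y} := fun z _ => by
    by_cases hz : z = x
    · exact .inl hz
    · exact .inr (hxy z hz)
  have := Set.ncard_le_ncard hsub
  rw [Set.ncard_univ] at this
  have := Set.ncard_insert_le x ({y} : Set W)
  rw [Set.ncard_singleton] at this
  omega

namespace TwoConnected

variable {W : Type} {G : SimpleGraph W}

theorem exists_adj_ne (hG : TwoConnected G) {x u : W} (hxu : x ≠ u) :
    ∃ m, G.Adj x m ∧ m ≠ u := by
  obtain ⟨z, hzx, hzu⟩ := exists_ne_ne_of_three_le_card hG.1 x u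
  have hx : x ∈ ((⊤ : G.Subgraph).deleteVerts {u}).verts := by simp [hxu]
  have hz : z ∈ ((⊤ : G.Subgraph).deleteVerts {u}).verts := by simp [hzu]
  obtain ⟨p⟩ := (hG.2 u).preconnected ⟨x, hx⟩ ⟨z, hz⟩
  have hadj := p.adj_snd (Walk.not_nil_of_ne fun h => hzx (congrArg Subtype.val h).symm)
  simp only [Subgraph.coe_adj, Subgraph.deleteVerts_adj] at hadj
  exact ⟨_, hadj.2.2.2.2, hadj.2.2.2.1⟩

theorem connected (hG : TwoConnected G) : G.Connected := by
  have : Nonempty W := (Nat.card_pos_iff.1 (by have := hG.1; omega)).1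
  refine ⟨fun a b => ?_⟩
  obtain ⟨c, hca, hcb⟩ := exists_ne_ne_of_three_le_card hG.1 a b
  have ha : a ∈ ((⊤ : G.Subgraph).deleteVerts {c}).verts := by simp [hca.symm]
  have hb : b ∈ ((⊤ : G.Subgraph).deleteVerts {c}).verts := by simp [hcb.symm]
  exact ((hG.2 c).preconnected ⟨a, ha⟩ ⟨b, hb⟩).map (Subgraph.hom _)

theorem exists_isCycle [Finite W] (hG : TwoConnected G) :
    ∃ (u : W) (p : G.Walk u u), p.IsCycle := by
  classical
  by_contra! hacyclic
  have : Fintype W := Fintype.ofFinite W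
  have : Nontrivial W := Finite.one_lt_card_iff_nontrivial.1 (by have := hG.1; omega)
  obtain ⟨v, hv⟩ := IsTree.exists_vert_degree_one_of_nontrivial
    (G := G) ⟨hG.connected, hacyclic⟩
  obtain ⟨u, hvu, hu⟩ := degree_eq_one_iff_existsUnique_adj.1 hv
  obtain ⟨m, hvm, hmu⟩ := hG.exists_adj_ne hvu.ne
  exact hmu (hu m hvm)

end TwoConnected

theorem List.Nodup.ncard_setOf_mem {α : Type} {l : List α} (hl : l.Nodup) :
    {a | a ∈ l}.ncard = l.length := by
  classical
  rw [← List.coe_toFinset, Set.ncard_coe_finset, List.toFinset_card_of_nodup hl]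

namespace SimpleGraph

variable {V : Type} {G : SimpleGraph V} {X : Set V}

theorem mk_mem_edgeCut {a b : V} :
    s(a, b) ∈ edgeCut G X ↔ G.Adj a b ∧ (a ∈ X ∧ b ∉ X ∨ b ∈ X ∧ a ∉ X) := by
  constructor
  · rintro ⟨x, y, hxy, he, hx, hy⟩
    rcases Sym2.eq_iff.1 he with ⟨rfl, rfl⟩ | ⟨rfl, rfl⟩
    · exact ⟨hxy, .inl ⟨hx, hy⟩⟩
    · exact ⟨hxy.symm, .inr ⟨hx, hy⟩⟩
  · rintro ⟨hab, ⟨ha, hb⟩ | ⟨hb, ha⟩⟩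
    · exact ⟨a, b, hab, rfl, ha, hb⟩
    · exact ⟨b, a, hab.symm, Sym2.eq_swap, hb, ha⟩

theorem edgeCut_compl : edgeCut G Xᶜ = edgeCut G X := by
  ext e
  induction e using Sym2.ind
  simp only [mk_mem_edgeCut, Set.mem_compl_iff, not_not]
  tauto

theorem edgeCut_union_eq_empty {Y : Set V} (hXY : Disjoint X Y)
    (h : edgeCut G X = edgeCut G Y) : edgeCut G (X ∪ Y) = ∅ := by
  refine Set.eq_empty_of_forall_notMem fun e he => ?_
  induction e using Sym2.ind with | _ a b
  have hcut : s(a, b) ∈ edgeCut G X ↔ s(a, b) ∈ edgeCut G Y := by rw [h]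
  have ha : a ∈ X → a ∉ Y := fun h => Set.disjoint_left.1 hXY h
  have hb : b ∈ X → b ∉ Y := fun h => Set.disjoint_left.1 hXY h
  simp only [mk_mem_edgeCut, Set.mem_union] at he hcut
  tauto

theorem Walk.notMem_edgeCut_of_support_subset {u v : V} (p : G.Walk u v)
    (hp : ∀ x ∈ p.support, x ∈ X) {e : Sym2 V} (he : e ∈ p.edges) : e ∉ edgeCut G X := by
  induction e using Sym2.ind with | _ a b
  rw [mk_mem_edgeCut]
  have := hp a (p.fst_mem_support_of_mem_edges he)
  have := hp b (p.snd_mem_support_of_mem_edges he)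
  tauto

theorem Reachable.mem_of_deleteEdges_edgeCut {a b : V}
    (h : (G.deleteEdges (edgeCut G X)).Reachable a b) (ha : a ∈ X) : b ∈ X := by
  by_contra hb
  obtain ⟨p⟩ := h
  obtain ⟨d, -, hd, hd'⟩ := p.exists_boundary_dart X ha hb
  have hadj := d.adj
  rw [deleteEdges_adj] at hadj
  exact hadj.2 (mk_mem_edgeCut.2 ⟨hadj.1, .inl ⟨hd, hd'⟩⟩)

theorem edgeCut_subset_edgeSet : edgeCut G X ⊆ G.edgeSet := by
  rintro _ ⟨a, b, hab, rfl, -⟩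
  exact hab

theorem isCyclicEdgeCut_edgeCut {u v : V} {p : G.Walk u u} {q : G.Walk v v}
    (hp : p.IsCycle) (hq : q.IsCycle) (hpX : ∀ x ∈ p.support, x ∈ X)
    (hqX : ∀ x ∈ q.support, x ∉ X) : IsCyclicEdgeCut G (edgeCut G X) := by
  have hq' : ∀ e ∈ q.edges, e ∉ edgeCut G X := fun e he => by
    rw [← edgeCut_compl]
    exact q.notMem_edgeCut_of_support_subset hqX he
  refine ⟨edgeCut_subset_edgeSet, u, v, p.toDeleteEdges _
    (fun _ => p.notMem_edgeCut_of_support_subset hpX), q.toDeleteEdges _ hq',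
    hp.toDeleteEdges G _ _, hq.toDeleteEdges G _ _, fun h => ?_⟩
  exact hqX v q.start_mem_support (h.mem_of_deleteEdges_edgeCut (hpX u p.start_mem_support))

theorem Subgraph.Connected.reachable_deleteEdges_edgeCut {S : G.Subgraph} (hS : S.Connected)
    {a b : V} (ha : a ∈ S.verts) (hb : b ∈ S.verts) :
    (G.deleteEdges (edgeCut G S.verts)).Reachable a b := by
  let φ : S.coe →g G.deleteEdges (edgeCut G S.verts) :=
    ⟨Subtype.val, fun {x y} hxy => by
      rw [SimpleGraph.deleteEdges_adj, mk_mem_edgeCut]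
      exact ⟨S.adj_sub hxy, by simp [x.2, y.2]⟩⟩
  exact (hS.coe.preconnected ⟨a, ha⟩ ⟨b, hb⟩).map φ

theorem Subgraph.verts_eq_of_edgeCut_eq (hG : G.Preconnected) {S T : G.Subgraph}
    (hS : S.Connected) (hT : T.Connected) (hST : edgeCut G S.verts = edgeCut G T.verts)
    {w : V} (hw : w ∉ S.verts ∪ T.verts) : S.verts = T.verts := by
  by_cases hST' : Disjoint S.verts T.verts
  · obtain ⟨z, hz⟩ := (Subgraph.connected_iff.1 hS).2
    have hreach : (G.deleteEdges (edgeCut G (S.verts ∪ T.verts))).Reachable z w := by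
      rw [edgeCut_union_eq_empty hST' hST, deleteEdges_empty]
      exact hG z w
    exact absurd (hreach.mem_of_deleteEdges_edgeCut (.inl hz)) hw
  · obtain ⟨z, hzS, hzT⟩ := Set.not_disjoint_iff_nonempty_inter.1 hST'
    refine Set.Subset.antisymm (fun x hx => ?_) (fun x hx => ?_)
    · exact (hST ▸ hS.reachable_deleteEdges_edgeCut hzS hx).mem_of_deleteEdges_edgeCut hzT
    · exact (hST ▸ hT.reachable_deleteEdges_edgeCut hzT hx).mem_of_deleteEdges_edgeCut hzS

theorem Walk.mem_verts_of_mem_support_map {H : G.Subgraph} {u v : H.verts}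
    (p : H.coe.Walk u v) {x : V} (hx : x ∈ (p.map H.hom).support) : x ∈ H.verts := by
  obtain ⟨x', -, rfl⟩ := List.mem_map.1 (p.support_map H.hom ▸ hx)
  exact x'.2

theorem Walk.IsCycle.ncard_verts_toSubgraph {u : V} {c : G.Walk u u} (hc : c.IsCycle) :
    c.toSubgraph.verts.ncard = c.length := by
  have hverts : c.toSubgraph.verts = {x | x ∈ c.support.tail} := by
    ext x
    rw [Walk.mem_verts_toSubgraph, ← c.cons_tail_support, List.mem_cons, Set.mem_ofPred_eq,
      List.tail_cons, or_iff_right_iff_imp]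
    rintro rfl
    exact Walk.end_mem_tail_support hc.not_nil
  rw [hverts, hc.support_nodup.ncard_setOf_mem, List.length_tail, Walk.length_support]
  rfl

theorem Walk.IsTrail.ncard_edgeSet_toSubgraph {u v : V} {p : G.Walk u v} (hp : p.IsTrail) :
    p.toSubgraph.edgeSet.ncard = p.length := by
  rw [Walk.edgeSet_toSubgraph, Walk.edgeSet, hp.edges_nodup.ncard_setOf_mem, Walk.length_edges]

theorem eq_or_eq_or_eq_of_adj_of_card_three {x a b c m : V}
    (hx : Nat.card {w // G.Adj x w} = 3) (ha : G.Adj x a) (hb : G.Adj x b) (hc : G.Adj x c)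
    (hab : a ≠ b) (hac : a ≠ c) (hbc : b ≠ c) (hm : G.Adj x m) :
    m = a ∨ m = b ∨ m = c := by
  have hcard : (G.neighborSet x).ncard = 3 := by rwa [← Nat.card_coe_set_eq]
  have hnbrs : {a, b, c} = G.neighborSet x := by
    refine Set.eq_of_subset_of_ncard_le (by rintro _ (rfl | rfl | rfl) <;> assumption) ?_
      (Set.finite_of_ncard_pos (by omega))
    rw [hcard, Set.ncard_eq_three.2 ⟨a, b, c, hab, hac, hbc, rfl⟩]
  have hm' : m ∈ ({a, b, c} : Set V) := hnbrs ▸ hm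
  simpa using hm'

theorem ncard_edgeCut_le [Finite V] (hX : ∀ x ∈ X, {b | G.Adj x b ∧ b ∉ X}.Subsingleton) :
    (edgeCut G X).ncard ≤ {x ∈ X | ∃ b, G.Adj x b ∧ b ∉ X}.ncard := by
  set P := {p : V × V | G.Adj p.1 p.2 ∧ p.1 ∈ X ∧ p.2 ∉ X}
  have hcut : edgeCut G X = (fun p : V × V => s(p.1, p.2)) '' P := by
    ext e
    constructor
    · rintro ⟨a, b, hab, rfl, ha, hb⟩
      exact ⟨(a, b), ⟨hab, ha, hb⟩, rfl⟩
    · rintro ⟨⟨a, b⟩, ⟨hab, ha, hb⟩, rfl⟩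
      exact ⟨a, b, hab, rfl, ha, hb⟩
  have hfst : Prod.fst '' P = {x ∈ X | ∃ b, G.Adj x b ∧ b ∉ X} := by
    ext x
    constructor
    · rintro ⟨⟨x, b⟩, ⟨hxb, hx, hb⟩, rfl⟩
      exact ⟨hx, b, hxb, hb⟩
    · rintro ⟨hx, b, hxb, hb⟩
      exact ⟨(x, b), ⟨hxb, hx, hb⟩, rfl⟩
  have hinj : P.InjOn Prod.fst := by
    rintro ⟨x, b⟩ ⟨hxb, hx, hb⟩ ⟨x', b'⟩ ⟨hxb', -, hb'⟩ (rfl : x = x')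
    exact congrArg (Prod.mk x) (hX x hx ⟨hxb, hb⟩ ⟨hxb', hb'⟩)
  rw [hcut, ← hfst, hinj.ncard_image]
  exact Set.ncard_image_le

theorem Walk.IsCycle.isInduced_toSubgraph [Finite V] (hG : ∀ v, Nat.card {w // G.Adj v w} = 3)
    {u : V} {c : G.Walk u u} (hc : c.IsCycle)
    (hcut : c.toSubgraph.verts.ncard ≤ (edgeCut G c.toSubgraph.verts).ncard) :
    c.toSubgraph.IsInduced := by
  set P := c.toSubgraph
  have hnbr : ∀ x ∈ P.verts, ∀ b ∉ P.verts, G.Adj x b →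
      ∀ m, G.Adj x m → m = b ∨ P.Adj x m := by
    intro x hx b hb hxb m hxm
    obtain ⟨n₁, n₂, hn, hP⟩ :=
      Set.ncard_eq_two.1 (hc.ncard_neighborSet_toSubgraph_eq_two (c.mem_verts_toSubgraph.1 hx))
    have h₁ : P.Adj x n₁ := by rw [← Subgraph.mem_neighborSet, hP]; exact .inl rfl
    have h₂ : P.Adj x n₂ := by rw [← Subgraph.mem_neighborSet, hP]; exact .inr rfl
    have hb₁ : n₁ ≠ b := fun h => hb (h ▸ P.edge_vert h₁.symm)
    have hb₂ : n₂ ≠ b := fun h => hb (h ▸ P.edge_vert h₂.symm)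
    rcases eq_or_eq_or_eq_of_adj_of_card_three (hG x) (P.adj_sub h₁) (P.adj_sub h₂) hxb
      hn hb₁ hb₂ hxm with rfl | rfl | rfl
    · exact .inr h₁
    · exact .inr h₂
    · exact .inl rfl
  have hout : {x ∈ P.verts | ∃ b, G.Adj x b ∧ b ∉ P.verts} = P.verts := by
    refine Set.eq_of_subset_of_ncard_le (fun x hx => hx.1) ?_ (Set.toFinite _)
    refine hcut.trans (ncard_edgeCut_le fun x hx b hb b' hb' => ?_)
    refine ((hnbr x hx b hb.2 hb.1 b' hb'.1).resolve_right fun h => ?_).symm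
    exact hb'.2 (P.edge_vert h.symm)
  intro x hx y hy hxy
  obtain ⟨-, b, hxb, hb⟩ := hout.symm ▸ hx
  exact (hnbr x hx b hb hxb y hxy).resolve_left fun h => hb (h ▸ hy)

theorem Subgraph.edgeSet_eq_of_twoConnected {H P : G.Subgraph} (hH : TwoConnected H.coe)
    (hverts : H.verts = P.verts) (hP : P.IsInduced)
    (hdeg : ∀ x ∈ P.verts, (P.neighborSet x).ncard = 2) : H.edgeSet = P.edgeSet := by
  have hHP : ∀ {a b}, H.Adj a b → P.Adj a b := fun hab =>
    hP (hverts ▸ H.edge_vert hab) (hverts ▸ H.edge_vert hab.symm) (H.adj_sub hab)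
  have hPH : ∀ {x y q}, P.neighborSet x = {y, q} → H.Adj x y := by
    intro x y q hyq
    have hq : P.Adj x q := by rw [← Subgraph.mem_neighborSet, hyq]; exact .inr rfl
    have hx : x ∈ H.verts := hverts ▸ P.edge_vert hq
    have hq' : q ∈ H.verts := hverts ▸ P.edge_vert hq.symm
    obtain ⟨m, hxm, hmq⟩ := hH.exists_adj_ne (x := ⟨x, hx⟩) (u := ⟨q, hq'⟩)
      (by simpa using (P.adj_sub hq).ne)
    have hm : m.1 ∈ P.neighborSet x := hHP hxm
    rw [hyq] at hm
    rcases hm with hm | hm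
    · exact hm ▸ hxm
    · exact absurd (Subtype.ext (Set.mem_singleton_iff.1 hm)) hmq
  ext e
  induction e using Sym2.ind with | _ x y
  refine ⟨hHP, fun hxy => ?_⟩
  obtain ⟨n₁, n₂, -, hnbrs⟩ := Set.ncard_eq_two.1 (hdeg x (P.edge_vert hxy))
  have hy : y ∈ P.neighborSet x := hxy
  rw [hnbrs] at hy
  rcases hy with rfl | rfl
  · exact hPH hnbrs
  · exact hPH (hnbrs.trans (Set.pair_comm _ _))

end SimpleGraph

namespace Fullerene

variable {V : Type} [Fintype V] (Fu : Fullerene V)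

theorem exists_isCycle_face (f : Fu.faces.Face) :
    ∃ (u : V) (c : Fu.G.Walk u u), c.IsCycle ∧
      c.toSubgraph.verts = Fu.faceVerts f ∧ c.toSubgraph.edgeSet = Fu.faces.boundary f := by
  obtain ⟨u, c, hc, hbd⟩ := Fu.faces.boundary_cycle f
  have hedges : c.toSubgraph.edgeSet = Fu.faces.boundary f := by
    ext e
    rw [Walk.edgeSet_toSubgraph, Walk.mem_edgeSet, hbd]
  refine ⟨u, c, hc, ?_, hedges⟩
  ext x
  rw [Walk.mem_verts_toSubgraph,
    Walk.mem_support_iff_exists_mem_edges_of_not_nil hc.not_nil]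
  simp only [faceVerts, Set.mem_ofPred_eq, hbd]

theorem ncard_faceVerts (f : Fu.faces.Face) :
    (Fu.faceVerts f).ncard = (Fu.faces.boundary f).ncard := by
  obtain ⟨u, c, hc, hverts, hedges⟩ := Fu.exists_isCycle_face f
  rw [← hverts, ← hedges, hc.ncard_verts_toSubgraph, hc.isTrail.ncard_edgeSet_toSubgraph]

theorem connected : Fu.G.Connected := by
  have h := Fu.threeConnected ∅ (by simp)
  rw [Subgraph.deleteVerts_empty] at h
  exact Subgraph.topIso.connected_iff.1 h

end Fullerene

theorem five_cut_component_is_pentagon_general {V : Type} [Fintype V] (Fu : Fullerene V)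
    (htriv : ∀ C : Set (Sym2 V), IsCyclicEdgeCut Fu.G C → C.ncard = 5 →
      ∃ f : Fu.faces.Face, (Fu.faces.boundary f).ncard = 5 ∧
        C = edgeCut Fu.G (Fu.faceVerts f))
    (H : Fu.G.Subgraph) (h2c : TwoConnected H.coe)
    (hhex : ∃ h : Fu.faces.Face, (Fu.faces.boundary h).ncard = 6 ∧
      Disjoint (Fu.faceVerts h) H.verts)
    (hcut : (edgeCut Fu.G H.verts).ncard = 5) :
    ∃ f : Fu.faces.Face, (Fu.faces.boundary f).ncard = 5 ∧
      H.verts = Fu.faceVerts f ∧ H.edgeSet = Fu.faces.boundary f := by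
  obtain ⟨hex, hhex6, hdisj⟩ := hhex
  obtain ⟨u, p, hp⟩ := h2c.exists_isCycle
  obtain ⟨v, q, hq, hqverts, -⟩ := Fu.exists_isCycle_face hex
  have hcyclic : IsCyclicEdgeCut Fu.G (edgeCut Fu.G H.verts) :=
    isCyclicEdgeCut_edgeCut (hp.map H.hom_injective) hq (fun _ => p.mem_verts_of_mem_support_map)
      fun x hx => Set.disjoint_left.1 hdisj (hqverts ▸ q.mem_verts_toSubgraph.2 hx)
  obtain ⟨f, hf5, hf⟩ := htriv _ hcyclic hcut
  obtain ⟨w, c, hc, hcverts, hcedges⟩ := Fu.exists_isCycle_face f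
  obtain ⟨y, hyhex, hyf⟩ : ∃ y ∈ Fu.faceVerts hex, y ∉ Fu.faceVerts f :=
    Set.exists_mem_notMem_of_ncard_lt_ncard (by
      rw [Fu.ncard_faceVerts, Fu.ncard_faceVerts, hf5, hhex6]; norm_num)
  have hy : y ∉ H.verts ∪ c.toSubgraph.verts := by
    rw [hcverts]
    rintro (h | h)
    exacts [Set.disjoint_left.1 hdisj hyhex h, hyf h]
  have hverts : H.verts = c.toSubgraph.verts :=
    Subgraph.verts_eq_of_edgeCut_eq Fu.connected.preconnected
      (Subgraph.connected_iff'.2 h2c.connected) c.toSubgraph_connected (hcverts ▸ hf) hy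
  have hinduced : c.toSubgraph.IsInduced := hc.isInduced_toSubgraph Fu.cubic (by
    rw [← hverts, hcut, hverts, hcverts, Fu.ncard_faceVerts, hf5])
  refine ⟨f, hf5, hverts.trans hcverts, hcedges ▸ ?_⟩
  exact H.edgeSet_eq_of_twoConnected h2c hverts hinduced
    fun x hx => hc.ncard_neighborSet_toSubgraph_eq_two (c.mem_verts_toSubgraph.1 hx)

/-- In a fullerene graph without non-trivial cyclic 5-edge-cuts (i.e. every cyclic
5-edge-cut consists of the edges leaving a pentagonal face), a 2-connected non-trivial
factor-critical subgraph `F*` with `|∇(F*)| = 5` which is vertex-disjoint from some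
hexagonal face of its complement must be a pentagon, i.e. the boundary of a pentagonal
face. -/
theorem five_cut_component_is_pentagon {V : Type} [Fintype V] (Fu : Fullerene V)
    (htriv : ∀ C : Set (Sym2 V), IsCyclicEdgeCut Fu.G C → C.ncard = 5 →
      ∃ f : Fu.faces.Face, (Fu.faces.boundary f).ncard = 5 ∧
        C = edgeCut Fu.G (Fu.faceVerts f))
    (H : Fu.G.Subgraph) (hnt : H.verts.Nontrivial) (h2c : TwoConnected H.coe)
    (hfc : FactorCritical H.coe)
    (hhex : ∃ h : Fu.faces.Face, (Fu.faces.boundary h).ncard = 6 ∧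
      Disjoint (Fu.faceVerts h) H.verts)
    (hcut : (edgeCut Fu.G H.verts).ncard = 5) :
    ∃ f : Fu.faces.Face, (Fu.faces.boundary f).ncard = 5 ∧
      H.verts = Fu.faceVerts f ∧ H.edgeSet = Fu.faces.boundary f :=
  five_cut_component_is_pentagon_general Fu htriv H h2c hhex hcut
end

section
/- Let B be a fragment of a fullerene graph F (a subgraph consisting of a cycle together with its interior) and let W be the set of vertices of degree 2 in B, all lying on the boundary of B. If |W| = 2, then the graph T = F − (V(B) \ W) is a single edge K₂ joining the two vertices of W. -/
open SimpleGraph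

/-- `B` is a fragment of the fullerene: a union of faces whose outer boundary (the
edges of `B` also lying on a face outside the fragment) is a single cycle — i.e. a
cycle of `F` together with its interior. -/
def Fullerene.IsFragment {V : Type} [Fintype V] (Fu : Fullerene V) (B : Fu.G.Subgraph) : Prop :=
  ∃ S : Set Fu.faces.Face,
    B.edgeSet = ⋃ f ∈ S, Fu.faces.boundary f ∧
    B.verts = {v | ∃ e ∈ B.edgeSet, v ∈ e} ∧
    ∃ (u : V) (p : Fu.G.Walk u u), p.IsCycle ∧
      {e | e ∈ B.edgeSet ∧ ∃ f, f ∉ S ∧ e ∈ Fu.faces.boundary f} = {e | e ∈ p.edges}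

/-- The set `W` of vertices of degree 2 in the fragment `B`. -/
def Fullerene.fragW {V : Type} [Fintype V] (Fu : Fullerene V) (B : Fu.G.Subgraph) : Set V :=
  {v | v ∈ B.verts ∧ Nat.card {w // B.Adj v w} = 2}

/-- The vertex set of `T = F - (V(B) \ W)`. -/
def Fullerene.fragTverts {V : Type} [Fintype V] (Fu : Fullerene V) (B : Fu.G.Subgraph) : Set V :=
  {v | v ∉ B.verts \ Fu.fragW B}


/-
In a fragment every vertex lies on a face, so has degree at least 2 in `B`; since `F` is cubic,
every vertex of `B` outside `W = {a, b}` has degree 3 in `B`, i.e. all of its `F`-neighbours are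
`B`-neighbours. Hence `V(B)` is closed under adjacency in `F - {a, b}`, which is connected by
3-connectivity, and it contains the `B`-neighbour of `a` other than `b`; so `B` spans `F` and `T`
has vertex set `{a, b}`. Finally `a` has a third `F`-neighbour `w` that is not a `B`-neighbour,
and `w ≠ b` would force `w` into `V(B) \ W`, where it would be `B`-adjacent to `a`.
-/

open SimpleGraph

namespace SimpleGraph

variable {V : Type*} {G : SimpleGraph V}

lemma Subgraph.two_le_ncard_neighborSet_of_isCycle [Finite V] {H : G.Subgraph} {u v : V}
    {c : G.Walk u u} (hc : c.IsCycle) (hcH : c.edgeSet ⊆ H.edgeSet) (hv : v ∈ c.support) :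
    2 ≤ (H.neighborSet v).ncard := by
  have hle : c.toSubgraph ≤ H := (Walk.toSubgraph_le_iff hc.not_nil).mpr hcH
  calc 2 = (c.toSubgraph.neighborSet v).ncard := (hc.ncard_neighborSet_toSubgraph_eq_two hv).symm
    _ ≤ (H.neighborSet v).ncard := Set.ncard_le_ncard (Subgraph.neighborSet_subset_of_subgraph hle v)

lemma Subgraph.adj_of_ncard_neighborSet_le [Finite V] (H : G.Subgraph) {v w : V}
    (hv : (G.neighborSet v).ncard ≤ (H.neighborSet v).ncard) (hw : G.Adj v w) : H.Adj v w := by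
  have hw' : w ∈ G.neighborSet v := hw
  rwa [← Set.eq_of_subset_of_ncard_le (H.neighborSet_subset v) hv] at hw'

lemma eq_univ_of_adj_mem_of_connected_deleteVerts {S X : Set V}
    (hconn : ((⊤ : G.Subgraph).deleteVerts S).coe.Connected) (hSX : S ⊆ X) {x : V} (hxX : x ∈ X)
    (hxS : x ∉ S) (hX : ∀ v ∈ X, v ∉ S → ∀ w, G.Adj v w → w ∈ X) : X = Set.univ := by
  refine Set.eq_univ_of_forall fun y => by_contra fun hyX => ?_
  have hyS : y ∉ S := fun hy => hyX (hSX hy)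
  obtain ⟨q⟩ := hconn.preconnected ⟨x, trivial, hxS⟩ ⟨y, trivial, hyS⟩
  obtain ⟨d, -, hdX, hdX'⟩ := q.exists_boundary_dart {z | z.val ∈ X} hxX hyX
  obtain ⟨-, -, hadj⟩ : _ ∧ _ ∧ G.Adj d.fst d.snd := by simpa using d.adj
  exact hdX' (hX _ hdX d.fst.property.2 _ hadj)

end SimpleGraph

namespace Fullerene

variable {V : Type} [Fintype V] (Fu : Fullerene V) {B : Fu.G.Subgraph} {v w : V}

lemma ncard_neighborSet (v : V) : (Fu.G.neighborSet v).ncard = 3 := by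
  rw [← Nat.card_coe_set_eq]
  exact Fu.cubic v

lemma mem_fragW_iff : v ∈ Fu.fragW B ↔ v ∈ B.verts ∧ (B.neighborSet v).ncard = 2 := by
  rw [← Nat.card_coe_set_eq]
  rfl

lemma fragTverts_eq_fragW (hB : B.verts = Set.univ) : Fu.fragTverts B = Fu.fragW B := by
  ext v
  simp [fragTverts, hB]

variable {Fu}

lemma IsFragment.two_le_ncard_neighborSet (hB : Fu.IsFragment B) (hv : v ∈ B.verts) :
    2 ≤ (B.neighborSet v).ncard := by
  obtain ⟨S, hE, hV, -⟩ := hB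
  rw [hV] at hv
  obtain ⟨e, heB, hve⟩ := hv
  rw [hE, Set.mem_iUnion₂] at heB
  obtain ⟨f, hfS, hef⟩ := heB
  obtain ⟨u, c, hc, hcf⟩ := Fu.faces.boundary_cycle f
  refine Subgraph.two_le_ncard_neighborSet_of_isCycle hc (fun e' he' => ?_)
    (c.mem_support_of_mem_edges ((hcf e).mp hef) hve)
  rw [hE]
  exact Set.mem_iUnion₂.mpr ⟨f, hfS, (hcf e').mpr he'⟩

lemma IsFragment.adj_of_notMem_fragW (hB : Fu.IsFragment B) (hv : v ∈ B.verts)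
    (hvW : v ∉ Fu.fragW B) (hw : Fu.G.Adj v w) : B.Adj v w := by
  refine B.adj_of_ncard_neighborSet_le ?_ hw
  have h2 := hB.two_le_ncard_neighborSet hv
  have h3 : (B.neighborSet v).ncard ≤ 3 :=
    Fu.ncard_neighborSet v ▸ Set.ncard_le_ncard (B.neighborSet_subset v)
  have hne : (B.neighborSet v).ncard ≠ 2 := fun h => hvW ((Fu.mem_fragW_iff).mpr ⟨hv, h⟩)
  rw [Fu.ncard_neighborSet]
  omega

lemma exists_adj_not_adj_of_mem_fragW (hv : v ∈ Fu.fragW B) : ∃ w, Fu.G.Adj v w ∧ ¬ B.Adj v w := by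
  by_contra! h
  have := Set.ncard_le_ncard (show Fu.G.neighborSet v ⊆ B.neighborSet v from h)
  rw [Fu.ncard_neighborSet, ((Fu.mem_fragW_iff).mp hv).2] at this
  omega

end Fullerene

/-- If a fragment `B` of a fullerene graph has exactly two vertices of degree 2, then
`T = F - (V(B) \ W)` is a single edge `K₂` joining the two vertices of `W`. -/
theorem fragment_two_deg2_K2 {V : Type} [Fintype V] (Fu : Fullerene V)
    (B : Fu.G.Subgraph) (hB : Fu.IsFragment B) (hW : (Fu.fragW B).ncard = 2) :
    ∃ a b : V, a ≠ b ∧ Fu.fragW B = {a, b} ∧ Fu.fragTverts B = {a, b} ∧ Fu.G.Adj a b := by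
  obtain ⟨a, b, hab, hWab⟩ := Set.ncard_eq_two.mp hW
  have haW : a ∈ Fu.fragW B := hWab ▸ Set.mem_insert a {b}
  have hclosed : ∀ v ∈ B.verts, v ∉ ({a, b} : Set V) → ∀ w, Fu.G.Adj v w → B.Adj v w :=
    fun v hv hvab _ hw => hB.adj_of_notMem_fragW hv (hWab ▸ hvab) hw
  obtain ⟨x, hax, hxb⟩ := Set.exists_ne_of_one_lt_ncard
    (by rw [((Fu.mem_fragW_iff).mp haW).2]; norm_num) b
  have huniv : B.verts = Set.univ :=
    eq_univ_of_adj_mem_of_connected_deleteVerts (Fu.threeConnected _ (Set.ncard_pair hab).le)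
      (hWab ▸ fun v hv => hv.1) hax.snd_mem (by simp [hax.ne.symm, hxb])
      fun v hv hvab w hw => (hclosed v hv hvab w hw).snd_mem
  refine ⟨a, b, hab, hWab, by rw [Fu.fragTverts_eq_fragW huniv, hWab], ?_⟩
  obtain ⟨w, haw, hBaw⟩ := Fullerene.exists_adj_not_adj_of_mem_fragW haW
  by_contra hnab
  have hwab : w ∉ ({a, b} : Set V) := by
    rintro (rfl | rfl)
    exacts [haw.ne rfl, hnab haw]
  exact hBaw (hclosed w (huniv ▸ trivial) hwab a haw.symm).symm
end
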